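/- Let ū ∈ ℝ² and let f : ℝ² → [0,∞) be measurable such that f, v ↦ ‖v−ū‖²·f(v) and v ↦ f(v)·log f(v) are integrable on ℝ² (with the convention 0·log 0 = 0). Set n := ∫_{ℝ²} f(v) dv. Then n·log n ≤ ∫_{ℝ²} f·log f dv + (1/2)·∫_{ℝ²} ‖v−ū‖²·f dv + n·log(2π), and moreover n·|log n| ≤ ∫_{ℝ²} f·log f dv + (1/2)·∫_{ℝ²} ‖v−ū‖²·f dv + n·log(2π) + 2·e^{−1}. -/

import Mathlib

/-!
With `n = ∫ f` and a positive probability density `g`, the tangent-line bound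
`a log b ≤ a log a + b - a` at `a = f v`, `b = n g v` integrates to Gibbs' inequality
`n log n ≤ ∫ f log f - ∫ f log g` (Jensen for `s ↦ s log s` with respect to `g`). For `g` the
unit-covariance Gaussian centred at `ū`, `-log g = log (2π) + ‖v - ū‖² / 2` in the plane, which
gives the first bound; the second follows from `-s log s ≤ e⁻¹`.
-/

open MeasureTheory Real Module

namespace Real

lemma mul_log_le_mul_log_add_sub {a b : ℝ} (ha : 0 ≤ a) (hb : 0 < b) :
    a * log b ≤ a * log a + b - a := by
  rcases ha.eq_or_lt with rfl | ha
  · simpa using hb.le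
  have h := mul_le_mul_of_nonneg_left (log_le_sub_one_of_pos (div_pos hb ha)) ha.le
  rw [log_div hb.ne' ha.ne', mul_sub, mul_sub, mul_div_cancel₀ _ ha.ne'] at h
  linarith

lemma neg_mul_log_le_exp_neg_one {x : ℝ} (hx : 0 ≤ x) : -(x * log x) ≤ exp (-1) := by
  rcases hx.eq_or_lt with rfl | hx
  · simp [(exp_pos _).le]
  simpa [exp_log hx, mul_comm] using mul_exp_neg_le_exp_neg_one (-log x)

lemma mul_abs_log_le {x : ℝ} (hx : 0 ≤ x) : x * |log x| ≤ x * log x + 2 * exp (-1) := by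
  rcases le_or_gt 0 (log x) with hlog | hlog
  · rw [abs_of_nonneg hlog]
    linarith [exp_pos (-1)]
  · rw [abs_of_neg hlog]
    linarith [neg_mul_log_le_exp_neg_one hx]

end Real

section Gibbs

variable {α : Type*} [MeasurableSpace α] {μ : Measure α} {f g : α → ℝ}

theorem integral_mul_log_integral_le (hf : ∀ x, 0 ≤ f x) (hg : ∀ x, 0 < g x)
    (hg_one : ∫ x, g x ∂μ = 1) (hf_int : Integrable f μ)
    (hflogf : Integrable (fun x => f x * log (f x)) μ)
    (hflogg : Integrable (fun x => f x * log (g x)) μ) :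
    (∫ x, f x ∂μ) * log (∫ x, f x ∂μ) ≤
      (∫ x, f x * log (f x) ∂μ) - ∫ x, f x * log (g x) ∂μ := by
  set n := ∫ x, f x ∂μ
  rcases (integral_nonneg hf : 0 ≤ n).eq_or_lt with hn | hn
  · have hf_zero : f =ᵐ[μ] 0 := (integral_eq_zero_iff_of_nonneg hf hf_int).mp hn.symm
    have hzero : ∀ h : α → ℝ, ∫ x, f x * h x ∂μ = 0 := fun h =>
      integral_eq_zero_of_ae (by filter_upwards [hf_zero] with x hx; simp [hx])
    rw [show n = 0 from hn.symm, hzero (fun x => log (f x)), hzero (fun x => log (g x))]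
    simp
  have hg_int : Integrable g μ := .of_integral_ne_zero (by simp [hg_one])
  have pointwise : ∀ x, f x * log n + f x * log (g x) ≤ f x * log (f x) + n * g x - f x := by
    intro x
    have := mul_log_le_mul_log_add_sub (hf x) (mul_pos hn (hg x))
    rwa [log_mul hn.ne' (hg x).ne', mul_add] at this
  have hlogn : Integrable (fun x => f x * log n) μ := hf_int.mul_const _
  have hng : Integrable (fun x => n * g x) μ := hg_int.const_mul n
  have integrated : n * log n + ∫ x, f x * log (g x) ∂μ ≤ (∫ x, f x * log (f x) ∂μ) + n - n :=
    calc n * log n + ∫ x, f x * log (g x) ∂μ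
        = ∫ x, f x * log n + f x * log (g x) ∂μ := by
          rw [integral_add hlogn hflogg, integral_mul_const]
      _ ≤ ∫ x, f x * log (f x) + n * g x - f x ∂μ :=
          integral_mono (hlogn.add hflogg) ((hflogf.add hng).sub hf_int) pointwise
      _ = (∫ x, f x * log (f x) ∂μ) + n - n := by
          rw [integral_sub (f := fun x => f x * log (f x) + n * g x) (hflogf.add hng) hf_int,
            integral_add hflogf hng, integral_const_mul, hg_one, mul_one]
  linarith

end Gibbs

section Gaussian

variable {V : Type*} [NormedAddCommGroup V] [InnerProductSpace ℝ V]

noncomputable def isotropicGaussianPDF (m v : V) : ℝ :=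
  (2 * π) ^ (-(finrank ℝ V : ℝ) / 2) * exp (-‖v - m‖ ^ 2 / 2)

lemma isotropicGaussianPDF_pos (m v : V) : 0 < isotropicGaussianPDF m v := by
  unfold isotropicGaussianPDF
  positivity

lemma integral_isotropicGaussianPDF [FiniteDimensional ℝ V] [MeasurableSpace V] [BorelSpace V]
    (m : V) : ∫ v, isotropicGaussianPDF m v = 1 := by
  have hexp : ∫ v : V, exp (-‖v‖ ^ 2 / 2) = (2 * π) ^ (finrank ℝ V / 2 : ℝ) := by
    simp_rw [neg_div, div_eq_inv_mul (‖_‖ ^ 2), ← neg_mul]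
    rw [GaussianFourier.integral_rexp_neg_mul_sq_norm (by norm_num : (0 : ℝ) < 2⁻¹), div_inv_eq_mul,
      mul_comm]
  unfold isotropicGaussianPDF
  rw [integral_const_mul, integral_sub_right_eq_self (fun v => exp (-‖v‖ ^ 2 / 2)) m, hexp,
    neg_div, rpow_neg (by positivity), inv_mul_cancel₀ (by positivity)]

lemma log_isotropicGaussianPDF (m v : V) :
    log (isotropicGaussianPDF m v) = -((finrank ℝ V / 2 : ℝ) * log (2 * π)) - ‖v - m‖ ^ 2 / 2 := by
  unfold isotropicGaussianPDF
  rw [log_mul (by positivity) (exp_pos _).ne', log_rpow (by positivity), log_exp]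
  ring

theorem integral_mul_log_integral_le_entropy_add_moment [FiniteDimensional ℝ V]
    [MeasurableSpace V] [BorelSpace V] {f : V → ℝ} (m : V) (hf : ∀ v, 0 ≤ f v)
    (hf_int : Integrable f)
    (hmom : Integrable (fun v => ‖v - m‖ ^ 2 * f v))
    (hent : Integrable (fun v => f v * log (f v))) :
    (∫ v, f v) * log (∫ v, f v) ≤
      (∫ v, f v * log (f v)) + (1 / 2) * (∫ v, ‖v - m‖ ^ 2 * f v)
        + (∫ v, f v) * ((finrank ℝ V / 2 : ℝ) * log (2 * π)) := by
  set c := (finrank ℝ V / 2 : ℝ) * log (2 * π)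
  have hlog : (fun v => f v * log (isotropicGaussianPDF m v)) =
      fun v => -c * f v - 1 / 2 * (‖v - m‖ ^ 2 * f v) := by
    funext v
    rw [log_isotropicGaussianPDF]
    ring
  have hint : Integrable (fun v => -c * f v - 1 / 2 * (‖v - m‖ ^ 2 * f v)) :=
    (hf_int.const_mul _).sub (hmom.const_mul _)
  have gibbs := integral_mul_log_integral_le hf (isotropicGaussianPDF_pos m)
    (integral_isotropicGaussianPDF m) hf_int hent (hlog ▸ hint)
  rw [hlog, integral_sub (hf_int.const_mul _) (hmom.const_mul _), integral_const_mul,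
    integral_const_mul] at gibbs
  linarith

end Gaussian

theorem entropy_moment_bound_general (uBar : EuclideanSpace ℝ (Fin 2))
    (f : EuclideanSpace ℝ (Fin 2) → ℝ)
    (hf_nonneg : ∀ v, 0 ≤ f v)
    (hf_int : Integrable f)
    (hmom : Integrable (fun v => ‖v - uBar‖ ^ 2 * f v))
    (hent : Integrable (fun v => f v * Real.log (f v))) :
    (∫ v, f v) * Real.log (∫ v, f v) ≤
        (∫ v, f v * Real.log (f v)) + (1 / 2) * (∫ v, ‖v - uBar‖ ^ 2 * f v)
          + (∫ v, f v) * Real.log (2 * Real.pi) ∧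
    (∫ v, f v) * |Real.log (∫ v, f v)| ≤
        (∫ v, f v * Real.log (f v)) + (1 / 2) * (∫ v, ‖v - uBar‖ ^ 2 * f v)
          + (∫ v, f v) * Real.log (2 * Real.pi) + 2 * Real.exp (-1) := by
  have bound := integral_mul_log_integral_le_entropy_add_moment uBar hf_nonneg hf_int hmom hent
  rw [finrank_euclideanSpace_fin, Nat.cast_ofNat, div_self two_ne_zero, one_mul] at bound
  exact ⟨bound, (mul_abs_log_le (integral_nonneg hf_nonneg)).trans (by linarith)⟩

/-- Jensen-type entropy bound: with `n := ∫ f`, one has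
`n·log n ≤ ∫ f·log f + (1/2)·∫ ‖v−ū‖²·f + n·log(2π)` and
`n·|log n| ≤ ∫ f·log f + (1/2)·∫ ‖v−ū‖²·f + n·log(2π) + 2e⁻¹`. -/
theorem entropy_moment_bound (uBar : EuclideanSpace ℝ (Fin 2))
    (f : EuclideanSpace ℝ (Fin 2) → ℝ) (hf_meas : Measurable f)
    (hf_nonneg : ∀ v, 0 ≤ f v)
    (hf_int : Integrable f)
    (hmom : Integrable (fun v => ‖v - uBar‖ ^ 2 * f v))
    (hent : Integrable (fun v => f v * Real.log (f v))) :
    (∫ v, f v) * Real.log (∫ v, f v) ≤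
        (∫ v, f v * Real.log (f v)) + (1 / 2) * (∫ v, ‖v - uBar‖ ^ 2 * f v)
          + (∫ v, f v) * Real.log (2 * Real.pi) ∧
    (∫ v, f v) * |Real.log (∫ v, f v)| ≤
        (∫ v, f v * Real.log (f v)) + (1 / 2) * (∫ v, ‖v - uBar‖ ^ 2 * f v)
          + (∫ v, f v) * Real.log (2 * Real.pi) + 2 * Real.exp (-1) :=
  entropy_moment_bound_general uBar f hf_nonneg hf_int hmom hent
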